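/- Let m, n be positive integers, G = Z_m × Z_n, and let 0 ≤ a < m, 0 ≤ b < gcd(m,n), 0 ≤ d < n be integers. If R: G×G → k^* is a quasi-bicharacter with respect to Φ_{a,b,d}, then, setting r_{11} = R(g_1,g_1), r_{12} = R(g_1,g_2), r_{21} = R(g_2,g_1), r_{22} = R(g_2,g_2), the following hold: r_{11}^m = ζ_m^a and ζ_m^{2a} = 1; r_{22}^n = ζ_n^d and ζ_n^{2d} = 1; r_{12}^n = 1 and r_{12}^m = ζ_n^{−b}; r_{21}^n = 1 and r_{21}^m = ζ_n^{b}. -/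

import Mathlib

/-- The 3-cocycle
`Φ_{a,b,d}(g₁^i g₂^j, g₁^s g₂^t, g₁^k g₂^l) = ζ_m^{a·i·[(s+k)/m]} · ζ_n^{b·j·[(s+k)/m]} · ζ_n^{d·j·[(t+l)/n]}`
on `Z_m × Z_n` (written additively), with values in `kˣ`. -/
noncomputable def PhiABD {k : Type*} [Field k] (m n : ℕ) (ζm ζn : kˣ) (a b d : ℕ)
    (x y z : ZMod m × ZMod n) : kˣ :=
  ζm ^ (a * x.1.val * ((y.1.val + z.1.val) / m)) *
    ζn ^ (b * x.2.val * ((y.1.val + z.1.val) / m)) *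
    ζn ^ (d * x.2.val * ((y.2.val + z.2.val) / n))

/-- `R : G × G → kˣ` is a quasi-bicharacter with respect to a (normalized 3-cocycle)
`Φ` if `R(xy,z) = R(x,z)·R(y,z)·Φ(z,x,y)·Φ(x,y,z)·Φ(x,z,y)⁻¹` and
`R(x,yz) = R(x,y)·R(x,z)·Φ(y,x,z)·Φ(y,z,x)⁻¹·Φ(x,y,z)⁻¹` for all `x, y, z ∈ G`. -/
def IsQuasiBicharacter {G : Type*} [AddCommGroup G] {k : Type*} [Field k]
    (Φ : G → G → G → kˣ) (R : G → G → kˣ) : Prop :=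
  (∀ x y z : G,
      R (x + y) z = R x z * R y z * (Φ z x y * Φ x y z * (Φ x z y)⁻¹)) ∧
  (∀ x y z : G,
      R x (y + z) = R x y * R x z * (Φ y x z * (Φ y z x)⁻¹ * (Φ x y z)⁻¹))

/-!
Iterating the two quasi-bicharacter identities along the cyclic subgroup generated by `x` gives
`R(N•x, y) = R(0, y) · R(x, y)^N · ∏_{j<N} Φ(y, j•x, x)` and
`R(y, N•x) = R(y, 0) · R(y, x)^N · (∏_{j<N} Φ(y, j•x, x))⁻¹`, because `Φ_{a,b,d}` is
symmetric in its last two arguments. For `N • x = 0` this yields `R(x, y)^N = P⁻¹` and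
`R(y, x)^N = P`. For the generators, the carry `[(j + 1)/N]` over a full period `j < N` equals `1`
exactly once (for `N > 1`), so `P` is `ζ_m^a`, `ζ_n^d`, `ζ_n^b` or `1`; for `r₁₁` and `r₂₂` both
equations hold, whence `P = P⁻¹`.
-/

open Finset

theorem Nat.sum_range_add_div_self {m c : ℕ} (hc : c ≤ m) :
    ∑ j ∈ range m, (j + c) / m = c := by
  obtain ⟨l, rfl⟩ := Nat.exists_eq_add_of_le' hc
  rw [sum_range_add, sum_eq_zero fun j hj => Nat.div_eq_of_lt (by grind), zero_add]
  calc ∑ i ∈ range c, (l + i + c) / (l + c) = ∑ i ∈ range c, 1 :=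
        sum_congr rfl fun i hi => by
          rw [mem_range] at hi
          rw [show l + i + c = (l + c) + i by ring, Nat.add_div_left _ (by omega),
            Nat.div_eq_of_lt (by omega)]
    _ = c := by simp

theorem Nat.mul_one_mod_of_lt {a m : ℕ} (h : a < m) : a * (1 % m) = a := by
  rcases Nat.lt_or_ge 1 m with h1 | h1
  · rw [Nat.mod_eq_of_lt h1, mul_one]
  · obtain rfl : a = 0 := by omega
    rw [zero_mul]

theorem eq_and_sq_eq_one_of_mul_eq_one_of_mul_inv_eq_one {G : Type*} [CommGroup G] {r p : G}
    (h₁ : r * p = 1) (h₂ : r * p⁻¹ = 1) : r = p ∧ p ^ 2 = 1 := by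
  have hr : r = p := mul_inv_eq_one.mp h₂
  subst hr
  exact ⟨rfl, by rwa [sq]⟩

namespace IsQuasiBicharacter

variable {G : Type*} [AddCommGroup G] {k : Type*} [Field k] {Φ : G → G → G → kˣ}
  {R : G → G → kˣ}

theorem apply_nsmul_left (hR : IsQuasiBicharacter Φ R) (hΦ : ∀ u v w, Φ u v w = Φ u w v)
    (x y : G) (N : ℕ) :
    R (N • x) y = R 0 y * R x y ^ N * ∏ j ∈ range N, Φ y (j • x) x := by
  induction N with
  | zero => simp
  | succ N ih =>
    rw [succ_nsmul, hR.1, ih, hΦ (N • x) x y, mul_inv_cancel_right, prod_range_succ, pow_succ]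
    ac_rfl

theorem apply_nsmul_right (hR : IsQuasiBicharacter Φ R) (hΦ : ∀ u v w, Φ u v w = Φ u w v)
    (x y : G) (N : ℕ) :
    R x (N • y) = R x 0 * R x y ^ N * (∏ j ∈ range N, Φ x (j • y) y)⁻¹ := by
  induction N with
  | zero => simp
  | succ N ih =>
    rw [succ_nsmul, hR.2, ih, hΦ (N • y) x y, mul_inv_cancel, one_mul, prod_range_succ,
      pow_succ, mul_inv]
    ac_rfl

theorem pow_mul_prod_eq_one_left (hR : IsQuasiBicharacter Φ R)
    (hΦ : ∀ u v w, Φ u v w = Φ u w v) {x : G} {N : ℕ} (hx : N • x = 0) (y : G) :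
    R x y ^ N * ∏ j ∈ range N, Φ y (j • x) x = 1 := by
  have h := hR.apply_nsmul_left hΦ x y N
  rwa [hx, mul_assoc, left_eq_mul] at h

theorem pow_mul_prod_inv_eq_one_right (hR : IsQuasiBicharacter Φ R)
    (hΦ : ∀ u v w, Φ u v w = Φ u w v) (x : G) {y : G} {N : ℕ} (hy : N • y = 0) :
    R x y ^ N * (∏ j ∈ range N, Φ x (j • y) y)⁻¹ = 1 := by
  have h := hR.apply_nsmul_right hΦ x y N
  rwa [hy, mul_assoc, left_eq_mul] at h

end IsQuasiBicharacter

theorem ZMod.sum_range_mod_add_val_div {m : ℕ} [NeZero m] (c : ZMod m) :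
    ∑ j ∈ range m, (j % m + c.val) / m = c.val := by
  refine (sum_congr rfl fun j hj => ?_).trans (Nat.sum_range_add_div_self c.val_lt.le)
  rw [Nat.mod_eq_of_lt (mem_range.mp hj)]

section PhiABD

variable {k : Type*} [Field k] (m n : ℕ) (ζm ζn : kˣ) (a b d : ℕ)

theorem PhiABD_comm (x y z : ZMod m × ZMod n) :
    PhiABD m n ζm ζn a b d x y z = PhiABD m n ζm ζn a b d x z y := by
  simp only [PhiABD, add_comm]

theorem prod_PhiABD_nsmul_fst [NeZero m] (x : ZMod m × ZMod n) :
    ∏ j ∈ range m, PhiABD m n ζm ζn a b d x (j • (1, 0)) (1, 0) =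
      ζm ^ (a * x.1.val * (1 : ZMod m).val) * ζn ^ (b * x.2.val * (1 : ZMod m).val) := by
  simp [PhiABD, prod_mul_distrib, prod_pow_eq_pow_sum, ← mul_sum, ZMod.sum_range_mod_add_val_div]

theorem prod_PhiABD_nsmul_snd [NeZero n] (x : ZMod m × ZMod n) :
    ∏ j ∈ range n, PhiABD m n ζm ζn a b d x (j • (0, 1)) (0, 1) =
      ζn ^ (d * x.2.val * (1 : ZMod n).val) := by
  simp [PhiABD, prod_pow_eq_pow_sum, ← mul_sum, ZMod.sum_range_mod_add_val_div]

end PhiABD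

theorem statement14_general (k : Type*) [Field k]
    (m n : ℕ) (hm : 0 < m) (hn : 0 < n)
    (ζm ζn : kˣ)
    (a b d : ℕ) (ha : a < m) (hb : b < Nat.gcd m n) (hd : d < n)
    (R : ZMod m × ZMod n → ZMod m × ZMod n → kˣ)
    (hR : IsQuasiBicharacter (PhiABD m n ζm ζn a b d) R) :
    (R ((1 : ZMod m), (0 : ZMod n)) ((1 : ZMod m), (0 : ZMod n)) ^ m = ζm ^ a ∧
      ζm ^ (2 * a) = 1) ∧
    (R ((0 : ZMod m), (1 : ZMod n)) ((0 : ZMod m), (1 : ZMod n)) ^ n = ζn ^ d ∧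
      ζn ^ (2 * d) = 1) ∧
    (R ((1 : ZMod m), (0 : ZMod n)) ((0 : ZMod m), (1 : ZMod n)) ^ n = 1 ∧
      R ((1 : ZMod m), (0 : ZMod n)) ((0 : ZMod m), (1 : ZMod n)) ^ m = (ζn ^ b)⁻¹) ∧
    (R ((0 : ZMod m), (1 : ZMod n)) ((1 : ZMod m), (0 : ZMod n)) ^ n = 1 ∧
      R ((0 : ZMod m), (1 : ZMod n)) ((1 : ZMod m), (0 : ZMod n)) ^ m = ζn ^ b) := by
  have : NeZero m := ⟨hm.ne'⟩
  have : NeZero n := ⟨hn.ne'⟩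
  have hΦ := PhiABD_comm m n ζm ζn a b d
  have hg₁ : m • ((1 : ZMod m), (0 : ZMod n)) = 0 := by simp
  have hg₂ : n • ((0 : ZMod m), (1 : ZMod n)) = 0 := by simp
  have hb' : b * (1 % n) * (1 % m) = b := by
    rw [Nat.mul_one_mod_of_lt (hb.trans_le (Nat.gcd_le_right m hn)),
      Nat.mul_one_mod_of_lt (hb.trans_le (Nat.gcd_le_left n hm))]
  have P₁₁ := prod_PhiABD_nsmul_fst m n ζm ζn a b d (1, 0)
  have P₂₁ := prod_PhiABD_nsmul_fst m n ζm ζn a b d (0, 1)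
  have P₁₂ := prod_PhiABD_nsmul_snd m n ζm ζn a b d (1, 0)
  have P₂₂ := prod_PhiABD_nsmul_snd m n ζm ζn a b d (0, 1)
  simp only [ZMod.val_one_eq_one_mod, ZMod.val_zero, Nat.mul_one_mod_of_lt ha,
    Nat.mul_one_mod_of_lt hd, hb', mul_zero, zero_mul, pow_zero, mul_one, one_mul]
    at P₁₁ P₂₁ P₁₂ P₂₂
  obtain ⟨e₁₁, s₁₁⟩ := eq_and_sq_eq_one_of_mul_eq_one_of_mul_inv_eq_one
    (P₁₁ ▸ hR.pow_mul_prod_eq_one_left hΦ hg₁ _)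
    (P₁₁ ▸ hR.pow_mul_prod_inv_eq_one_right hΦ _ hg₁)
  obtain ⟨e₂₂, s₂₂⟩ := eq_and_sq_eq_one_of_mul_eq_one_of_mul_inv_eq_one
    (P₂₂ ▸ hR.pow_mul_prod_eq_one_left hΦ hg₂ _)
    (P₂₂ ▸ hR.pow_mul_prod_inv_eq_one_right hΦ _ hg₂)
  have e₁₂ := P₁₂ ▸ hR.pow_mul_prod_inv_eq_one_right hΦ (1, 0) hg₂
  have e₁₂' := P₂₁ ▸ hR.pow_mul_prod_eq_one_left hΦ hg₁ (0, 1)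
  have e₂₁ := P₁₂ ▸ hR.pow_mul_prod_eq_one_left hΦ hg₂ (1, 0)
  have e₂₁' := P₂₁ ▸ hR.pow_mul_prod_inv_eq_one_right hΦ (0, 1) hg₁
  rw [inv_one, mul_one] at e₁₂
  rw [mul_one] at e₂₁
  rw [pow_mul', pow_mul']
  exact ⟨⟨e₁₁, s₁₁⟩, ⟨e₂₂, s₂₂⟩, ⟨e₁₂, eq_inv_of_mul_eq_one_left e₁₂'⟩,
    ⟨e₂₁, mul_inv_eq_one.mp e₂₁'⟩⟩

/-- If `R` is a quasi-bicharacter on `Z_m × Z_n` with respect to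
`Φ_{a,b,d}` then, with `r₁₁ = R(g₁,g₁)`, `r₁₂ = R(g₁,g₂)`, `r₂₁ = R(g₂,g₁)`,
`r₂₂ = R(g₂,g₂)`: `r₁₁^m = ζ_m^a` and `ζ_m^{2a} = 1`; `r₂₂^n = ζ_n^d` and `ζ_n^{2d} = 1`;
`r₁₂^n = 1` and `r₁₂^m = ζ_n^{−b}`; `r₂₁^n = 1` and `r₂₁^m = ζ_n^{b}`. -/
theorem statement14 (k : Type*) [Field k] [IsAlgClosed k] [CharZero k]
    (m n : ℕ) (hm : 0 < m) (hn : 0 < n)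
    (ζm ζn : kˣ) (hζm : IsPrimitiveRoot ζm m) (hζn : IsPrimitiveRoot ζn n)
    (a b d : ℕ) (ha : a < m) (hb : b < Nat.gcd m n) (hd : d < n)
    (R : ZMod m × ZMod n → ZMod m × ZMod n → kˣ)
    (hR : IsQuasiBicharacter (PhiABD m n ζm ζn a b d) R) :
    (R ((1 : ZMod m), (0 : ZMod n)) ((1 : ZMod m), (0 : ZMod n)) ^ m = ζm ^ a ∧
      ζm ^ (2 * a) = 1) ∧
    (R ((0 : ZMod m), (1 : ZMod n)) ((0 : ZMod m), (1 : ZMod n)) ^ n = ζn ^ d ∧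
      ζn ^ (2 * d) = 1) ∧
    (R ((1 : ZMod m), (0 : ZMod n)) ((0 : ZMod m), (1 : ZMod n)) ^ n = 1 ∧
      R ((1 : ZMod m), (0 : ZMod n)) ((0 : ZMod m), (1 : ZMod n)) ^ m = (ζn ^ b)⁻¹) ∧
    (R ((0 : ZMod m), (1 : ZMod n)) ((1 : ZMod m), (0 : ZMod n)) ^ n = 1 ∧
      R ((0 : ZMod m), (1 : ZMod n)) ((1 : ZMod m), (0 : ZMod n)) ^ m = ζn ^ b) :=
  statement14_general k m n hm hn ζm ζn a b d ha hb hd R hR
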